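/- Let 𝓛 = X² + Y² − λD + q_x X + q_y Y on ℝ³, where X = ∂_x − (y/2)∂_z, Y = ∂_y + (x/2)∂_z, D = x∂_x + y∂_y + 2z∂_z, λ > 0, and q_x, q_y are smooth functions bounded in absolute value by a constant C. Let V(x,y,z) = (x² + y²)² + z². Then there exist constants c > 0 and C₁ > 0 such that 𝓛V(p) + cV(p) ≤ C₁ for all p ∈ ℝ³. -/
import Mathlib

/-- Partial derivative in the `i`-th coordinate direction on ℝ³. -/
noncomputable def pd (i : Fin 3) (f : (Fin 3 → ℝ) → ℝ) : (Fin 3 → ℝ) → ℝ :=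
  fun p => fderiv ℝ f p (Pi.single i 1)

/-- The generator `𝓛 = X² + Y² − λD + q_x X + q_y Y` on ℝ³, written out in
coordinates. -/
noncomputable def Lop (qx qy : (Fin 3 → ℝ) → ℝ) (lam : ℝ)
    (f : (Fin 3 → ℝ) → ℝ) : (Fin 3 → ℝ) → ℝ :=
  fun p =>
    pd 0 (pd 0 f) p + pd 1 (pd 1 f) p + (p 0 ^ 2 + p 1 ^ 2) / 4 * pd 2 (pd 2 f) p
      - p 1 * pd 2 (pd 0 f) p + p 0 * pd 2 (pd 1 f) p
      + (qx p - lam * p 0) * pd 0 f p + (qy p - lam * p 1) * pd 1 f p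
      + (-(2 * lam * p 2) + (qy p * p 0 - qx p * p 1) / 2) * pd 2 f p

/-- The Lyapunov function `V(x,y,z) = (x² + y²)² + z²`. -/
noncomputable def Vfun : (Fin 3 → ℝ) → ℝ :=
  fun p => (p 0 ^ 2 + p 1 ^ 2) ^ 2 + p 2 ^ 2

noncomputable def pr (i : Fin 3) : (Fin 3 → ℝ) →L[ℝ] ℝ := ContinuousLinearMap.proj i

lemma pdV (i : Fin 3) (p : Fin 3 → ℝ) : pd i Vfun p =
    (4*(p 0^2 + p 1^2)*p 0) * (Pi.single i 1 : Fin 3 → ℝ) 0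
    + (4*(p 0^2 + p 1^2)*p 1) * (Pi.single i 1 : Fin 3 → ℝ) 1
    + (2 * p 2) * (Pi.single i 1 : Fin 3 → ℝ) 2 := by
  have h0 : HasFDerivAt (fun q : Fin 3 → ℝ => q 0) (pr 0) p := (pr 0).hasFDerivAt
  have h1 : HasFDerivAt (fun q : Fin 3 → ℝ => q 1) (pr 1) p := (pr 1).hasFDerivAt
  have h2 : HasFDerivAt (fun q : Fin 3 → ℝ => q 2) (pr 2) p := (pr 2).hasFDerivAt
  have hs : HasFDerivAt (fun q : Fin 3 → ℝ => q 0 * q 0 + q 1 * q 1)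
      ((p 0 • pr 0 + p 0 • pr 0) + (p 1 • pr 1 + p 1 • pr 1)) p := (h0.mul h0).add (h1.mul h1)
  have hV : HasFDerivAt Vfun
      (((p 0*p 0 + p 1*p 1) • ((p 0 • pr 0 + p 0 • pr 0) + (p 1 • pr 1 + p 1 • pr 1))
        + (p 0*p 0 + p 1*p 1) • ((p 0 • pr 0 + p 0 • pr 0) + (p 1 • pr 1 + p 1 • pr 1)))
        + (p 2 • pr 2 + p 2 • pr 2)) p := by
    have hVeq : Vfun = fun q : Fin 3 → ℝ => (q 0*q 0 + q 1*q 1) * (q 0*q 0 + q 1*q 1) + q 2 * q 2 := by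
      funext q; simp [Vfun]; ring
    rw [hVeq]
    exact (hs.mul hs).add (h2.mul h2)
  rw [pd, hV.fderiv]
  simp [pr, ContinuousLinearMap.proj_apply]
  ring

lemma pd_g0 (j : Fin 3) (p : Fin 3 → ℝ) :
    pd j (fun q : Fin 3 → ℝ => 4*(q 0^2 + q 1^2)*q 0) p =
    (4*(p 0^2+p 1^2) + 8*p 0^2) * (Pi.single j 1 : Fin 3 → ℝ) 0
    + (8*p 0*p 1) * (Pi.single j 1 : Fin 3 → ℝ) 1 := by
  have h0 : HasFDerivAt (fun q : Fin 3 → ℝ => q 0) (pr 0) p := (pr 0).hasFDerivAt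
  have h1 : HasFDerivAt (fun q : Fin 3 → ℝ => q 1) (pr 1) p := (pr 1).hasFDerivAt
  have hs : HasFDerivAt (fun q : Fin 3 → ℝ => q 0 * q 0 + q 1 * q 1)
      ((p 0 • pr 0 + p 0 • pr 0) + (p 1 • pr 1 + p 1 • pr 1)) p := (h0.mul h0).add (h1.mul h1)
  have hg : HasFDerivAt (fun q : Fin 3 → ℝ => 4*(q 0^2 + q 1^2)*q 0)
      ((4:ℝ) • ((p 0*p 0 + p 1*p 1) • pr 0 + p 0 • ((p 0 • pr 0 + p 0 • pr 0) + (p 1 • pr 1 + p 1 • pr 1)))) p := by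
    have he : (fun q : Fin 3 → ℝ => 4*(q 0^2 + q 1^2)*q 0)
        = fun q : Fin 3 → ℝ => 4*((q 0 * q 0 + q 1 * q 1) * q 0) := by funext q; ring
    rw [he]; exact (hs.mul h0).const_mul 4
  rw [pd, hg.fderiv]
  simp [pr, ContinuousLinearMap.proj_apply]
  ring

lemma pd_g1 (j : Fin 3) (p : Fin 3 → ℝ) :
    pd j (fun q : Fin 3 → ℝ => 4*(q 0^2 + q 1^2)*q 1) p =
    (8*p 0*p 1) * (Pi.single j 1 : Fin 3 → ℝ) 0
    + (4*(p 0^2+p 1^2) + 8*p 1^2) * (Pi.single j 1 : Fin 3 → ℝ) 1 := by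
  have h0 : HasFDerivAt (fun q : Fin 3 → ℝ => q 0) (pr 0) p := (pr 0).hasFDerivAt
  have h1 : HasFDerivAt (fun q : Fin 3 → ℝ => q 1) (pr 1) p := (pr 1).hasFDerivAt
  have hs : HasFDerivAt (fun q : Fin 3 → ℝ => q 0 * q 0 + q 1 * q 1)
      ((p 0 • pr 0 + p 0 • pr 0) + (p 1 • pr 1 + p 1 • pr 1)) p := (h0.mul h0).add (h1.mul h1)
  have hg : HasFDerivAt (fun q : Fin 3 → ℝ => 4*(q 0^2 + q 1^2)*q 1)
      ((4:ℝ) • ((p 0*p 0 + p 1*p 1) • pr 1 + p 1 • ((p 0 • pr 0 + p 0 • pr 0) + (p 1 • pr 1 + p 1 • pr 1)))) p := by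
    have he : (fun q : Fin 3 → ℝ => 4*(q 0^2 + q 1^2)*q 1)
        = fun q : Fin 3 → ℝ => 4*((q 0 * q 0 + q 1 * q 1) * q 1) := by funext q; ring
    rw [he]; exact (hs.mul h1).const_mul 4
  rw [pd, hg.fderiv]
  simp [pr, ContinuousLinearMap.proj_apply]
  ring

lemma pd_g2 (j : Fin 3) (p : Fin 3 → ℝ) :
    pd j (fun q : Fin 3 → ℝ => 2*q 2) p = 2 * (Pi.single j 1 : Fin 3 → ℝ) 2 := by
  have h2 : HasFDerivAt (fun q : Fin 3 → ℝ => q 2) (pr 2) p := (pr 2).hasFDerivAt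
  have hg : HasFDerivAt (fun q : Fin 3 → ℝ => 2*q 2) ((2:ℝ) • pr 2) p := h2.const_mul 2
  rw [pd, hg.fderiv]
  simp [pr, ContinuousLinearMap.proj_apply]

lemma young (eps a b : ℝ) (heps : 0 < eps) : a*b ≤ eps*a^2 + b^2/(4*eps) := by
  have h4 : (0:ℝ) < 4*eps := by linarith
  have h2 : (a*b - eps*a^2) * (4*eps) ≤ b^2 := by nlinarith [sq_nonneg (2*eps*a - b)]
  have h3 : a*b - eps*a^2 ≤ b^2/(4*eps) := (le_div_iff₀ h4).mpr h2
  linarith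

lemma d1 (C s lam : ℝ) (h : lam ≠ 0) : (32*C^2*s)/(4*(lam/2)) = (16*C^2/lam)*s := by
  field_simp; ring

lemma d2 (C s lam : ℝ) (h : lam ≠ 0) : (2*C^2*s)/(4*lam) = (C^2/(2*lam))*s := by
  field_simp; ring

set_option maxHeartbeats 2000000 in
theorem lyapunov_bound_V
    (qx qy : (Fin 3 → ℝ) → ℝ) (hqx : ContDiff ℝ (⊤ : ℕ∞) qx) (hqy : ContDiff ℝ (⊤ : ℕ∞) qy)
    (C : ℝ) (hqx_bdd : ∀ p, |qx p| ≤ C) (hqy_bdd : ∀ p, |qy p| ≤ C)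
    (lam : ℝ) (hlam : 0 < lam) :
    ∃ c > (0 : ℝ), ∃ C₁ > (0 : ℝ), ∀ p : Fin 3 → ℝ,
      Lop qx qy lam Vfun p + c * Vfun p ≤ C₁ := by
  have hV0 : pd 0 Vfun = fun q : Fin 3 → ℝ => 4*(q 0^2 + q 1^2)*q 0 := by
    funext q; rw [pdV]; simp only [Pi.single_eq_same, Pi.single_eq_of_ne (by decide : (0:Fin 3) ≠ 1), Pi.single_eq_of_ne (by decide : (0:Fin 3) ≠ 2), Pi.single_eq_of_ne (by decide : (1:Fin 3) ≠ 0), Pi.single_eq_of_ne (by decide : (1:Fin 3) ≠ 2), Pi.single_eq_of_ne (by decide : (2:Fin 3) ≠ 0), Pi.single_eq_of_ne (by decide : (2:Fin 3) ≠ 1), mul_one, mul_zero, add_zero, zero_add]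
  have hV1 : pd 1 Vfun = fun q : Fin 3 → ℝ => 4*(q 0^2 + q 1^2)*q 1 := by
    funext q; rw [pdV]; simp only [Pi.single_eq_same, Pi.single_eq_of_ne (by decide : (0:Fin 3) ≠ 1), Pi.single_eq_of_ne (by decide : (0:Fin 3) ≠ 2), Pi.single_eq_of_ne (by decide : (1:Fin 3) ≠ 0), Pi.single_eq_of_ne (by decide : (1:Fin 3) ≠ 2), Pi.single_eq_of_ne (by decide : (2:Fin 3) ≠ 0), Pi.single_eq_of_ne (by decide : (2:Fin 3) ≠ 1), mul_one, mul_zero, add_zero, zero_add]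
  have hV2 : pd 2 Vfun = fun q : Fin 3 → ℝ => 2*q 2 := by
    funext q; rw [pdV]; simp only [Pi.single_eq_same, Pi.single_eq_of_ne (by decide : (0:Fin 3) ≠ 1), Pi.single_eq_of_ne (by decide : (0:Fin 3) ≠ 2), Pi.single_eq_of_ne (by decide : (1:Fin 3) ≠ 0), Pi.single_eq_of_ne (by decide : (1:Fin 3) ≠ 2), Pi.single_eq_of_ne (by decide : (2:Fin 3) ≠ 0), Pi.single_eq_of_ne (by decide : (2:Fin 3) ≠ 1), mul_one, mul_zero, add_zero, zero_add]
  obtain ⟨K, hK⟩ : ∃ K : ℝ, K = 33/2 + 16*C^2/lam + C^2/(2*lam) := ⟨_, rfl⟩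
  refine ⟨2*lam, by linarith, K^2/(4*(3*lam/2)) + 1, add_pos_of_nonneg_of_pos (div_nonneg (sq_nonneg K) (by linarith)) one_pos, fun p => ?_⟩
  have hLop : Lop qx qy lam Vfun p =
      (4*(p 0^2+p 1^2) + 8*p 0^2) + (4*(p 0^2+p 1^2) + 8*p 1^2)
      + (p 0^2+p 1^2)/4 * 2
      + (qx p - lam * p 0) * (4*(p 0^2+p 1^2)*p 0)
      + (qy p - lam * p 1) * (4*(p 0^2+p 1^2)*p 1)
      + (-(2*lam*p 2) + (qy p * p 0 - qx p * p 1)/2) * (2*p 2) := by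
    rw [Lop, hV0, hV1, hV2, pd_g0, pd_g1, pd_g2, pd_g0, pd_g1]
    simp only [Pi.single_eq_same, Pi.single_eq_of_ne (by decide : (0:Fin 3) ≠ 1), Pi.single_eq_of_ne (by decide : (0:Fin 3) ≠ 2), Pi.single_eq_of_ne (by decide : (1:Fin 3) ≠ 0), Pi.single_eq_of_ne (by decide : (1:Fin 3) ≠ 2), Pi.single_eq_of_ne (by decide : (2:Fin 3) ≠ 0), Pi.single_eq_of_ne (by decide : (2:Fin 3) ≠ 1)]
    ring
  rw [hLop, Vfun]
  clear hLop hV0 hV1 hV2 hqx hqy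
  set x := p 0 with hx; set y := p 1 with hy; set z := p 2 with hz
  set u := qx p with hu; set v := qy p with hv
  clear_value x y z u v
  have hC0 : 0 ≤ C := le_trans (abs_nonneg _) (hqx_bdd p)
  have hu2 : u^2 ≤ C^2 := by
    have := abs_le.mp (hqx_bdd p); nlinarith [this.1, this.2]
  have hv2 : v^2 ≤ C^2 := by
    have := abs_le.mp (hqy_bdd p); nlinarith [this.1, this.2]
  set s : ℝ := x^2 + y^2 with hs
  clear_value s
  have hs0 : 0 ≤ s := by rw [hs]; positivity
  have ht2 : (u*x + v*y)^2 ≤ 2*C^2*s := by nlinarith [sq_nonneg (u*y - v*x), sq_nonneg x, sq_nonneg y, hs]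
  have ht2' : (v*x - u*y)^2 ≤ 2*C^2*s := by nlinarith [sq_nonneg (v*y + u*x), sq_nonneg x, sq_nonneg y, hs]
  -- bound 4 s (u x + v y)
  have hA : s * (4*(u*x+v*y)) ≤ lam/2 * s^2 + (4*(u*x+v*y))^2/(4*(lam/2)) :=
    young (lam/2) s (4*(u*x+v*y)) (by linarith)
  have hA2 : (4*(u*x+v*y))^2/(4*(lam/2)) ≤ (32*C^2*s)/(4*(lam/2)) := by
    apply div_le_div_of_nonneg_right ?h1 ?h2
    case h2 => linarith
    case h1 => nlinarith [ht2]
  have hA3 : (32*C^2*s)/(4*(lam/2)) = (16*C^2/lam)*s := d1 C s lam (ne_of_gt hlam)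
  -- bound (v x - u y) z
  have hB : z * (v*x - u*y) ≤ lam * z^2 + (v*x - u*y)^2/(4*lam) := young lam z _ hlam
  have hB2 : (v*x - u*y)^2/(4*lam) ≤ (2*C^2*s)/(4*lam) := by
    apply div_le_div_of_nonneg_right ?h1 ?h2
    case h2 => linarith
    case h1 => exact ht2'
  have hB3 : (2*C^2*s)/(4*lam) = (C^2/(2*lam))*s := d2 C s lam (ne_of_gt hlam)
  -- bound K s
  have hKs : s * K ≤ (3*lam/2) * s^2 + K^2/(4*(3*lam/2)) := young (3*lam/2) s K (by linarith)
  have hKexp : s * K = (33/2)*s + (16*C^2/lam)*s + (C^2/(2*lam))*s := by rw [hK]; ring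
  have hss : s^2 = s*x^2 + s*y^2 := by nlinarith [hs, hs0]
  nlinarith [hA, hA2, hA3, hB, hB2, hB3, hKs, hKexp, hs0, sq_nonneg z, hs, hss]
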